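/- arXiv:1312.0687 — 3 statements merged into one kernel-verified Lean document; each statement's English description precedes it below -/
import Mathlib

section
/- Let K be an algebraic closure of the field F₅ with 5 elements. For every pair x, y ∈ K with y² = x³ − 1, the pair (x²⁵, y²⁵) also satisfies y² = x³ − 1, and in the group of points of the elliptic curve E : y² = x³ − 1 over K one has (x²⁵, y²⁵) = −(5 • (x, y)); that is, the square of the relative Frobenius of E equals multiplication by −5. -/
/-!
Let `K` be an algebraic closure of `F₅`.  For every pair `x, y ∈ K` with `y² = x³ − 1`,
the pair `(x²⁵, y²⁵)` also satisfies `y² = x³ − 1`, and in the group of points of the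
elliptic curve `E : y² = x³ − 1` over `K` one has `(x²⁵, y²⁵) = −(5 • (x, y))`; that is,
the square of the relative Frobenius of `E` equals multiplication by `−5`.
-/

instance : Fact (Nat.Prime 5) := ⟨by norm_num⟩

/-- An algebraic closure of the prime field `F₅ = ℤ/5ℤ`. -/
abbrev K : Type := AlgebraicClosure (ZMod 5)

/-- The elliptic curve `y² = x³ − 1` (in affine Weierstrass form) over `K`. -/
noncomputable def E : WeierstrassCurve.Affine K :=
  { a₁ := 0, a₂ := 0, a₃ := 0, a₄ := 0, a₆ := -1 }

/-!
Write `P = (x, y)` and compute `5 • P = 4 • P + P` by doubling twice and then adding `P`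
with the chord rule. After eliminating `y²` through the curve equation, the coordinates of
`5 • P` are rational functions of `x` (times `y` for the second one), and in characteristic 5
they reduce to `x²⁵` and `-y²⁵`. The formulas degenerate exactly on the zeros of `y (x⁶ + 2)`
and `x (x³ + 1)`, which up to units are the division polynomials `ψ₄` and `ψ₃` of `E` in
characteristic 5; on the 4-torsion both `-5` and `φ²` act as `-1`, on the 3-torsion both
act as `1`.
-/

open WeierstrassCurve.Affine

theorem WeierstrassCurve.Affine.Point.some_eq_some {R : Type*} [CommRing R]
    {W : WeierstrassCurve.Affine R} {x y x' y' : R} {h : W.Nonsingular x y}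
    {h' : W.Nonsingular x' y'} (hx : x = x') (hy : y = y') :
    Point.some x y h = Point.some x' y' h' := by
  subst hx hy
  rfl

theorem WeierstrassCurve.Affine.Point.exists_some_eq_some {R : Type*} [CommRing R]
    {W : WeierstrassCurve.Affine R} {x y x' y' : R} (h : W.Nonsingular x y)
    (hx : x = x') (hy : y = y') :
    ∃ h' : W.Nonsingular x' y', Point.some x y h = Point.some x' y' h' := by
  subst hx hy
  exact ⟨h, rfl⟩

namespace E

theorem negY_eq_neg (x y : K) : E.negY x y = -y := by
  simp [negY, E]

theorem sq_eq_of_nonsingular {x y : K} (h : E.Nonsingular x y) : y ^ 2 = x ^ 3 - 1 := by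
  have := (equation_iff x y).1 h.1
  simp only [E] at this
  linear_combination this

theorem pow_25_of_four_torsion {x y : K} (hxy : y ^ 2 = x ^ 3 - 1) (h4 : y * (x ^ 6 + 2) = 0) :
    x ^ 25 = x ∧ y ^ 25 = -y := by
  grind

theorem pow_25_of_three_torsion {x y : K} (hxy : y ^ 2 = x ^ 3 - 1) (h3 : x * (x ^ 3 + 1) = 0) :
    x ^ 25 = x ∧ y ^ 25 = y := by
  grind

/-- The numerator of `fourX x - x` is `ψ₃`. -/
noncomputable def fourX (x : K) : K :=
  x + 3 * x * (x ^ 3 + 1) / ((x ^ 3 - 1) * (x ^ 6 + 2) ^ 2)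

noncomputable def fourY (x y : K) : K :=
  y * (4 * x ^ 24 + 2 * x ^ 21 + 3 * x ^ 18 + 2 * x ^ 15 + 2 * x ^ 9 + x ^ 6 + 2 * x ^ 3 + 3) /
    ((x ^ 3 - 1) ^ 2 * (x ^ 6 + 2) ^ 3)

variable [DecidableEq K]

theorem two_nsmul_some {x y : K} (h : E.Nonsingular x y) (hy : y ≠ 0) :
    ∃ h₂ : E.Nonsingular ((4 * x ^ 4 + 2 * x) / (x ^ 3 - 1))
        (y * (2 * x ^ 6 + 4) / (x ^ 3 - 1) ^ 2),
      2 • Point.some x y h = Point.some _ _ h₂ := by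
  have hxy := sq_eq_of_nonsingular h
  have hne : y ≠ E.negY x y := by rw [negY_eq_neg]; grind
  rw [two_nsmul, Point.add_self_of_Y_ne hne]
  refine Point.exists_some_eq_some _ ?_ ?_ <;>
  · simp only [slope_of_Y_ne rfl hne, addY, negAddY, negY_eq_neg]
    simp only [addX, E]
    grind

theorem four_nsmul_some {x y : K} (h : E.Nonsingular x y) (hy : y ≠ 0) (hx6 : x ^ 6 + 2 ≠ 0) :
    ∃ h₄ : E.Nonsingular (fourX x) (fourY x y), 4 • Point.some x y h = Point.some _ _ h₄ := by
  have hxy := sq_eq_of_nonsingular h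
  have h1 : x ^ 3 - 1 ≠ 0 := by grind
  obtain ⟨h₂, hP₂⟩ := two_nsmul_some h hy
  obtain ⟨h₄, hP₄⟩ := two_nsmul_some h₂ (by field_simp; grind)
  rw [show (4 : ℕ) = 2 * 2 from rfl, mul_nsmul, hP₂, hP₄]
  -- the curve equation at `2 • P`: the left side is the square of its `y`-coordinate
  have hx₂ : ((4 * x ^ 4 + 2 * x) / (x ^ 3 - 1)) ^ 3 - 1 = -(x ^ 6 + 2) ^ 2 / (x ^ 3 - 1) ^ 3 := by
    field_simp
    grind
  refine Point.exists_some_eq_some _ ?_ ?_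
  · rw [hx₂, fourX]
    field_simp
    grind
  · rw [hx₂, fourY]
    field_simp
    grind

theorem four_nsmul_eq_zero {x y : K} (h : E.Nonsingular x y) (h4 : y * (x ^ 6 + 2) = 0) :
    4 • Point.some x y h = 0 := by
  rw [show (4 : ℕ) = 2 * 2 from rfl, mul_nsmul]
  by_cases hy : y = 0
  · rw [two_nsmul (Point.some x y h),
      Point.add_self_of_Y_eq (h₁ := h) (by rw [negY_eq_neg, hy, neg_zero]), nsmul_zero]
  obtain ⟨h₂, hP₂⟩ := two_nsmul_some h hy
  have hy₂ : y * (2 * x ^ 6 + 4) / (x ^ 3 - 1) ^ 2 = 0 := by grind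
  rw [hP₂, two_nsmul, Point.add_self_of_Y_eq (h₁ := h₂) (by rw [negY_eq_neg, hy₂, neg_zero])]

theorem four_nsmul_eq_self {x y : K} (h : E.Nonsingular x y) (hy : y ≠ 0) (hx6 : x ^ 6 + 2 ≠ 0)
    (h3 : x * (x ^ 3 + 1) = 0) : 4 • Point.some x y h = Point.some x y h := by
  have hxy := sq_eq_of_nonsingular h
  have h1 : x ^ 3 - 1 ≠ 0 := by grind
  obtain ⟨h₄, hP₄⟩ := four_nsmul_some h hy hx6
  rw [hP₄]
  refine Point.some_eq_some ?_ ?_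
  · rw [fourX, mul_assoc 3, h3, mul_zero, zero_div, add_zero]
  · rw [fourY, div_eq_iff (by simp [h1, hx6])]
    grind

theorem five_nsmul_some {x y : K} (h : E.Nonsingular x y) (h' : E.Nonsingular (x ^ 25) (y ^ 25))
    (hy : y ≠ 0) (hx6 : x ^ 6 + 2 ≠ 0) (h3 : x * (x ^ 3 + 1) ≠ 0) :
    5 • Point.some x y h = -Point.some _ _ h' := by
  have hxy := sq_eq_of_nonsingular h
  have h1 : x ^ 3 - 1 ≠ 0 := by grind
  have hD : (x ^ 3 - 1) * (x ^ 6 + 2) ≠ 0 := mul_ne_zero h1 hx6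
  obtain ⟨h₄, hP₄⟩ := four_nsmul_some h hy hx6
  have hne : fourX x ≠ x := by
    rw [fourX, Ne, add_eq_left, mul_assoc]
    exact div_ne_zero (mul_ne_zero (by grind) h3) (by simp [h1, hx6])
  have hslope : E.slope (fourX x) x (fourY x y) y =
      y * x ^ 2 * (x ^ 18 + 2 * x ^ 15 + 3 * x ^ 9 + x ^ 6 + x ^ 3 + 1) /
        ((x ^ 3 - 1) * (x ^ 6 + 2)) := by
    rw [slope_of_X_ne hne, div_eq_div_iff (sub_ne_zero.2 hne) hD, fourX, fourY]
    field_simp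
    grind
  have hx₅ : E.addX (fourX x) x (E.slope (fourX x) x (fourY x y) y) = x ^ 25 := by
    rw [hslope, addX, fourX]
    simp only [E]
    field_simp
    grind
  rw [succ_nsmul, hP₄, Point.add_of_X_ne hne, Point.neg_some]
  refine Point.some_eq_some hx₅ ?_
  rw [addY, negAddY, hx₅, hslope, negY_eq_neg, negY_eq_neg, fourX, fourY]
  have hy24 : y ^ 24 = (x ^ 3 - 1) ^ 12 := by rw [← hxy, ← pow_mul]
  field_simp
  rw [hy24]
  grind

end E

open Classical in
theorem frobenius_sq_eq_neg_five_smul (x y : K) (hxy : y ^ 2 = x ^ 3 - 1) :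
    (y ^ 25) ^ 2 = (x ^ 25) ^ 3 - 1 ∧
      ∀ (h : E.Nonsingular x y) (h' : E.Nonsingular (x ^ 25) (y ^ 25)),
        WeierstrassCurve.Affine.Point.some _ _ h' =
          -(5 • WeierstrassCurve.Affine.Point.some _ _ h) := by
  refine ⟨?_, fun h h' => ?_⟩
  · calc (y ^ 25) ^ 2 = (y ^ 2) ^ 5 ^ 2 := by ring
      _ = (x ^ 3) ^ 5 ^ 2 - 1 ^ 5 ^ 2 := by rw [hxy, sub_pow_char_pow]
      _ = (x ^ 25) ^ 3 - 1 := by ring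
  set P := Point.some x y h
  by_cases h4 : y * (x ^ 6 + 2) = 0
  · obtain ⟨hx₂₅, hy₂₅⟩ := E.pow_25_of_four_torsion hxy h4
    rw [succ_nsmul, E.four_nsmul_eq_zero h h4, zero_add, Point.neg_some]
    exact Point.some_eq_some hx₂₅ (by rw [hy₂₅, E.negY_eq_neg])
  obtain ⟨hy, hx6⟩ := mul_ne_zero_iff.1 h4
  by_cases h3 : x * (x ^ 3 + 1) = 0
  · obtain ⟨hx₂₅, hy₂₅⟩ := E.pow_25_of_three_torsion hxy h3
    calc Point.some _ _ h' = P := Point.some_eq_some hx₂₅ hy₂₅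
      _ = -(5 • P) := by
        rw [show 5 • P = 2 • (4 • P) - 3 • P by abel, E.four_nsmul_eq_self h hy hx6 h3]
        abel
  · rw [E.five_nsmul_some h h' hy hx6 h3, neg_neg]
end

section
/- Let K be an algebraic closure of the field F₅ with 5 elements and let P = (a, b) be an affine point of the elliptic curve E : y² = x³ − 1 over K (so b² = a³ − 1). Then 4 • P = O and 2 • P ≠ O if and only if a²⁵ = a and b²⁵ ≠ b (i.e. P is a 4-torsion point that is not 2-torsion exactly when a lies in F₂₅ but b does not). -/
open Classical

section CharFive

variable {F : Type*} [Field F] [CharP F 5]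

lemma ringChar_ne_two_of_charP_five : ringChar F ≠ 2 := by
  rw [ringChar.eq F 5]; norm_num

lemma neg_eq_self_iff_of_charP_five {x : F} : -x = x ↔ x = 0 :=
  Ring.eq_self_iff_eq_zero_of_char_ne_two ringChar_ne_two_of_charP_five

lemma pow_five_sub_one (x : F) : (x - 1) ^ 5 = x ^ 5 - 1 := by
  simpa using sub_pow_char (R := F) x 1

lemma sq_eq_three_iff {c : F} : c ^ 2 = 3 ↔ c ^ 8 = 1 ∧ (c - 1) ^ 12 = -1 := by
  have h5 : (5 : F) = 0 := CharP.ofNat_eq_zero F 5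
  constructor
  · intro hc
    have hc5 : c ^ 5 = -c := by linear_combination (c ^ 3 + 3 * c) * hc + 2 * c * h5
    have hnorm : (c - 1) ^ 6 = -2 := by
      calc (c - 1) ^ 6 = (c ^ 5 - 1) * (c - 1) := by rw [← pow_five_sub_one]; ring
        _ = -2 := by linear_combination hc5 * (c - 1) - hc
    refine ⟨by linear_combination (c ^ 6 + 3 * c ^ 4 + 9 * c ^ 2 + 27) * hc + 16 * h5, ?_⟩
    calc (c - 1) ^ 12 = ((c - 1) ^ 6) ^ 2 := by ring
      _ = -1 := by rw [hnorm]; linear_combination h5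
  · rintro ⟨h8, h12⟩
    have h4 : c ^ 4 = 1 ∨ c ^ 4 = -1 := sq_eq_one_iff.mp (by linear_combination h8)
    rcases h4 with h4 | h4
    · exfalso
      have hd5 : (c - 1) ^ 5 = c - 1 := by rw [pow_five_sub_one]; linear_combination c * h4
      have hd4 : (c - 1) ^ 4 = -1 := by linear_combination h12 - ((c - 1) ^ 7 + (c - 1) ^ 3) * hd5
      have hd : c - 1 = 0 :=
        neg_eq_self_iff_of_charP_five.mp (by linear_combination hd5 - (c - 1) * hd4)
      rw [hd] at hd4
      norm_num at hd4
    · have hd6 : (c - 1) ^ 6 = 1 - c ^ 2 := by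
        calc (c - 1) ^ 6 = (c ^ 5 - 1) * (c - 1) := by rw [← pow_five_sub_one]; ring
          _ = 1 - c ^ 2 := by linear_combination (c - 1) * c * h4
      have h12' : (1 - c ^ 2) ^ 2 = -1 := by rw [← hd6, ← h12]; ring
      linear_combination 3 * h4 - 3 * h12' - c ^ 2 * h5

lemma pow_six_eq_three_iff {a b : F} (hab : b ^ 2 = a ^ 3 - 1) (hb : b ≠ 0) :
    a ^ 6 = 3 ↔ a ^ 25 = a ∧ b ^ 25 ≠ b := by
  have hb25 : b ^ 25 = b * (a ^ 3 - 1) ^ 12 := by rw [← hab]; ring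
  rw [show a ^ 6 = (a ^ 3) ^ 2 by ring, sq_eq_three_iff]
  constructor
  · rintro ⟨h8, h12⟩
    refine ⟨by linear_combination a * h8, fun hB => hb ?_⟩
    exact neg_eq_self_iff_of_charP_five.mp (by linear_combination hb25.symm.trans hB - b * h12)
  · rintro ⟨hA, hB⟩
    have hu : (a ^ 3 - 1) ^ 25 = a ^ 3 - 1 := by
      have := sub_pow_char_pow (R := F) (p := 5) (n := 2) (a ^ 3) 1
      norm_num at this
      rw [this, ← pow_mul, mul_comm, pow_mul, hA]
    have hu0 : a ^ 3 - 1 ≠ 0 := hab ▸ pow_ne_zero 2 hb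
    have h24 : ((a ^ 3 - 1) ^ 12) ^ 2 = 1 :=
      mul_left_cancel₀ hu0 (by linear_combination hu)
    have h12 : (a ^ 3 - 1) ^ 12 = -1 :=
      (sq_eq_one_iff.mp h24).resolve_left fun h => hB (by rw [hb25, h, mul_one])
    have ha0 : a ≠ 0 := by
      rintro rfl
      norm_num at h12
      exact Ring.neg_one_ne_one_of_char_ne_two (R := F) ringChar_ne_two_of_charP_five h12.symm
    exact ⟨mul_left_cancel₀ ha0 (by linear_combination hA), h12⟩

end CharFive

namespace WeierstrassCurve.Affine.Point

variable {F : Type*} [Field F] {W : WeierstrassCurve.Affine F} {x y : F}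

lemma two_smul_some_eq_zero_iff (h : W.Nonsingular x y) :
    2 • some x y h = 0 ↔ y = W.negY x y := by
  rw [two_smul]
  refine ⟨fun h0 => ?_, add_self_of_Y_eq⟩
  by_contra hy
  exact some_ne_zero _ ((add_self_of_Y_ne hy).symm.trans h0)

lemma four_smul_some_eq_zero_iff (h : W.Nonsingular x y) (hy : y ≠ W.negY x y) :
    4 • some x y h = 0 ↔
      W.addY x x y (W.slope x x y y) =
        W.negY (W.addX x x (W.slope x x y y)) (W.addY x x y (W.slope x x y y)) := by
  rw [show 4 = 2 * 2 from rfl, mul_nsmul, two_smul ℕ (some x y h), add_self_of_Y_ne hy,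
    two_smul_some_eq_zero_iff]

end WeierstrassCurve.Affine.Point

open WeierstrassCurve.Affine

lemma E_negY (x y : K) : E.negY x y = -y := by
  simp [E, negY]

lemma E_eq_negY_iff {x y : K} : y = E.negY x y ↔ y = 0 := by
  rw [E_negY, eq_comm, neg_eq_self_iff_of_charP_five]

lemma E_slope_self {a b : K} (hb : b ≠ 0) : E.slope a a b b = 3 * a ^ 2 / (2 * b) := by
  rw [slope_of_Y_ne rfl (mt E_eq_negY_iff.mp hb), E_negY]
  simp only [E]
  ring

lemma E_addY_self (a b ℓ : K) : E.addY a a b ℓ = -(ℓ * (ℓ ^ 2 - 3 * a) + b) := by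
  rw [addY, negAddY, addX, E_negY]
  simp only [E]
  ring

lemma E_addY_self_eq_zero_iff {a b : K} (hab : b ^ 2 = a ^ 3 - 1) (hb : b ≠ 0) :
    E.addY a a b (E.slope a a b b) = 0 ↔ a ^ 6 = 3 := by
  have h5 : (5 : K) = 0 := CharP.ofNat_eq_zero K 5
  have h2b : 2 * b ≠ 0 := mul_ne_zero (Ring.two_ne_zero ringChar_ne_two_of_charP_five) hb
  set ℓ := 3 * a ^ 2 / (2 * b)
  have hℓ : 2 * b * ℓ = 3 * a ^ 2 := mul_div_cancel₀ _ h2b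
  have key : (2 * b) ^ 3 * (ℓ * (ℓ ^ 2 - 3 * a) + b) = 3 - a ^ 6 := by
    calc (2 * b) ^ 3 * (ℓ * (ℓ ^ 2 - 3 * a) + b)
        = (2 * b * ℓ) ^ 3 - 12 * a * b ^ 2 * (2 * b * ℓ) + 8 * (b ^ 2) ^ 2 := by ring
      _ = 27 * (a ^ 3) ^ 2 - 36 * a ^ 3 * (a ^ 3 - 1) + 8 * (a ^ 3 - 1) ^ 2 := by
        rw [hℓ, hab]; ring
      _ = 3 - a ^ 6 := by linear_combination (4 * a ^ 3 + 1) * h5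
  rw [E_slope_self hb, E_addY_self, neg_eq_zero, ← mul_right_inj' (pow_ne_zero 3 h2b), key,
    mul_zero, sub_eq_zero, eq_comm]

theorem four_torsion_not_two_torsion_iff (a b : K) (hab : b ^ 2 = a ^ 3 - 1)
    (h : E.Nonsingular a b) :
    (4 • WeierstrassCurve.Affine.Point.some a b h = 0 ∧
        2 • WeierstrassCurve.Affine.Point.some a b h ≠ 0) ↔
      (a ^ 25 = a ∧ b ^ 25 ≠ b) := by
  by_cases hb : b = 0
  · have h2 : 2 • Point.some a b h = 0 :=
      (Point.two_smul_some_eq_zero_iff h).mpr (E_eq_negY_iff.mpr hb)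
    have hB : b ^ 25 = b := by rw [hb, zero_pow (by norm_num)]
    simp only [h2, hB, ne_eq, not_true_eq_false, and_false]
  · have hy : b ≠ E.negY a b := mt E_eq_negY_iff.mp hb
    rw [ne_eq, Point.four_smul_some_eq_zero_iff h hy, Point.two_smul_some_eq_zero_iff,
      E_eq_negY_iff, E_eq_negY_iff, E_addY_self_eq_zero_iff hab hb, pow_six_eq_three_iff hab hb]
    simp [hb]
end

section
/- Let K be an algebraic closure of the field F₅ with 5 elements and let P = (a, b) be an affine point of the elliptic curve E : y² = x³ − 1 over K (so b² = a³ − 1). Then 6 • P = O and 2 • P ≠ O if and only if a²⁵ = a, b²⁵ = b and b ≠ 0 (i.e. P is a 6-torsion point that is not 2-torsion exactly when a ∈ F₂₅ and b ∈ F₂₅ \ {0}). -/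
/-!
If `b ≠ 0`, then `6 • P = 0` says that `2 • P` is a nonzero `3`-torsion point, i.e. that the
division polynomial `Ψ₃` vanishes at `x(2 • P)`: on a short Weierstrass curve
`Ψ₃(x) = (x - x(2 • Q)) * (2y)²` for a point `Q = (x, y)` outside the `2`-torsion, so `3 • Q = 0`
iff `2 • Q = -Q` iff `x(2 • Q) = x`. Clearing the denominator `(2b)²` of the duplication formula
turns `Ψ₃(x(2 • P)) = 0` into `f(a) = 0` for a polynomial `f ∈ F₅[a]` of degree `16`, and `f` is
the greatest common divisor of `a²⁵ - a` and `(a³ - 1)¹² - 1 = b²⁴ - 1`.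
-/

lemma pow_twentyFive_eq_self_and_cube_sub_one_pow_twelve_eq_one_iff {R : Type*} [CommRing R]
    [CharP R 5] (a : R) :
    a ^ 25 = a ∧ (a ^ 3 - 1) ^ 12 = 1 ↔
      a ^ 16 + a ^ 13 + 4 * a ^ 10 + 4 * a ^ 7 + 3 * a ^ 4 + 3 * a = 0 := by
  refine ⟨fun ⟨h25, h12⟩ => ?_, fun hf => ⟨?_, ?_⟩⟩
  · linear_combination (norm := (ring_nf; reduce_mod_char!))
      (4 * a ^ 18 + 4 * a ^ 15 + 2 * a ^ 9 + 2 * a ^ 3 + 2) * h25 + (a ^ 7 + 3 * a ^ 4) * h12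
  · linear_combination (norm := (ring_nf; reduce_mod_char!))
      (a ^ 9 + 4 * a ^ 6 + 2 * a ^ 3 + 3) * hf
  · linear_combination (norm := (ring_nf; reduce_mod_char!))
      (a ^ 20 + 2 * a ^ 17 + 3 * a ^ 11 + a ^ 8 + a ^ 5 + a ^ 2) * hf

namespace WeierstrassCurve.Affine

variable {F : Type*} [Field F] {W : WeierstrassCurve.Affine F}

section ShortNF

variable [W.IsShortNF]

lemma negY_of_isShortNF (x y : F) : W.negY x y = -y := by
  simp [negY]

lemma eval_Ψ₃_of_isShortNF (x : F) :
    W.Ψ₃.eval x = 3 * x ^ 4 + 6 * W.a₄ * x ^ 2 + 12 * W.a₆ * x - W.a₄ ^ 2 := by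
  simp only [Ψ₃, b₂_of_isShortNF, b₄_of_isShortNF, b₆_of_isShortNF, b₈_of_isShortNF,
    Polynomial.eval_add, Polynomial.eval_mul, Polynomial.eval_pow, Polynomial.eval_C,
    Polynomial.eval_X, Polynomial.eval_ofNat]
  ring

lemma equation_iff_of_isShortNF (x y : F) :
    W.Equation x y ↔ y ^ 2 = x ^ 3 + W.a₄ * x + W.a₆ := by
  simp [equation_iff]

lemma two_mul_ne_zero_of_Y_ne_negY {x y : F} (hy : y ≠ W.negY x y) : 2 * y ≠ 0 := by
  rwa [negY_of_isShortNF, ← sub_ne_zero, sub_neg_eq_add, ← two_mul] at hy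

variable [DecidableEq F]

lemma addX_slope_self_mul_sq_of_isShortNF {x y : F} (h : W.Equation x y)
    (hy : y ≠ W.negY x y) :
    W.addX x x (W.slope x x y y) * (2 * y) ^ 2 =
      x ^ 4 - 2 * W.a₄ * x ^ 2 - 8 * W.a₆ * x + W.a₄ ^ 2 := by
  have h2y := two_mul_ne_zero_of_Y_ne_negY hy
  have h2 : (2 : F) ≠ 0 := left_ne_zero_of_mul h2y
  have hy0 : y ≠ 0 := right_ne_zero_of_mul h2y
  rw [equation_iff_of_isShortNF] at h
  rw [slope_of_Y_ne rfl hy, negY_of_isShortNF, sub_neg_eq_add, ← two_mul]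
  simp only [addX, a₁_of_isShortNF, a₂_of_isShortNF]
  field_simp
  linear_combination (-8 * x) * h

end ShortNF

namespace Point

variable [DecidableEq F]

lemma two_nsmul_some_eq_zero_iff {x y : F} (h : W.Nonsingular x y) :
    2 • some x y h = 0 ↔ y = W.negY x y := by
  rw [two_nsmul]
  refine ⟨fun h2 => ?_, add_self_of_Y_eq⟩
  by_contra hy
  exact some_ne_zero _ ((add_self_of_Y_ne hy).symm.trans h2)

lemma three_nsmul_some_eq_zero_iff [W.IsShortNF] {x y : F} (h : W.Nonsingular x y) :
    3 • some x y h = 0 ↔ W.Ψ₃.eval x = 0 := by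
  have heq := (equation_iff_of_isShortNF x y).mp h.1
  rw [succ_nsmul, add_eq_zero_iff_eq_neg]
  by_cases hy : y = W.negY x y
  · have hA : 3 * x ^ 2 + W.a₄ ≠ 0 := by
      have := ((nonsingular_iff x y).mp h).2.resolve_right (fun h' => h' hy)
      simpa [eq_comm] using this
    have hΨ : W.Ψ₃.eval x = -(3 * x ^ 2 + W.a₄) ^ 2 := by
      rw [negY_of_isShortNF] at hy
      rw [eval_Ψ₃_of_isShortNF]
      linear_combination -12 * x * heq + 6 * x * y * hy
    rw [(two_nsmul_some_eq_zero_iff h).mpr hy, hΨ, neg_eq_zero]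
    exact iff_of_false (fun h0 => some_ne_zero h (neg_eq_zero.mp h0.symm)) (pow_ne_zero 2 hA)
  · rw [two_nsmul, add_self_of_Y_ne hy]
    have hΨ : W.Ψ₃.eval x = (x - W.addX x x (W.slope x x y y)) * (2 * y) ^ 2 := by
      rw [eval_Ψ₃_of_isShortNF]
      linear_combination -4 * x * heq + addX_slope_self_mul_sq_of_isShortNF h.1 hy
    generalize_proofs h₂
    have hne : some _ _ h₂ ≠ some x y h := fun h' =>
      some_ne_zero h (add_eq_left.mp ((add_self_of_Y_ne hy).trans h'))
    rw [hΨ, mul_eq_zero_iff_right (pow_ne_zero 2 (two_mul_ne_zero_of_Y_ne_negY hy)), sub_eq_zero,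
      eq_comm (a := x), X_eq_iff (h₁ := h₂) (h₂ := h), or_iff_right hne]

end Point

section CharFive

variable [CharP F 5] [DecidableEq F] [W.IsShortNF]

lemma eval_Ψ₃_addX_slope_self_eq_zero_iff (ha₄ : W.a₄ = 0) (ha₆ : W.a₆ = -1) {a b : F}
    (h : W.Equation a b) (hy : b ≠ W.negY a b) :
    W.Ψ₃.eval (W.addX a a (W.slope a a b b)) = 0 ↔
      a ^ 16 + a ^ 13 + 4 * a ^ 10 + 4 * a ^ 7 + 3 * a ^ 4 + 3 * a = 0 := by
  have hx := addX_slope_self_mul_sq_of_isShortNF h hy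
  rw [equation_iff_of_isShortNF] at h
  set x := W.addX a a (W.slope a a b b)
  have h3 : (3 : F) ≠ 0 := by
    simpa using (CharP.cast_eq_zero_iff F 5 3).not.mpr (by norm_num)
  have key : W.Ψ₃.eval x * ((2 * b) ^ 2) ^ 4 =
      3 * (a ^ 16 + a ^ 13 + 4 * a ^ 10 + 4 * a ^ 7 + 3 * a ^ 4 + 3 * a) := by
    rw [eval_Ψ₃_of_isShortNF, ha₄, ha₆]
    rw [ha₄, ha₆] at hx h
    linear_combination (norm := (ring_nf; reduce_mod_char!))
      3 * ((x * (2 * b) ^ 2) ^ 3 + (x * (2 * b) ^ 2) ^ 2 * (a ^ 4 + 8 * a)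
        + x * (2 * b) ^ 2 * (a ^ 4 + 8 * a) ^ 2 + (a ^ 4 + 8 * a) ^ 3 + ((2 * b) ^ 2) ^ 3) * hx
      + 192 * (a ^ 4 + 8 * a) * (b ^ 4 + b ^ 2 * (a ^ 3 - 1) + (a ^ 3 - 1) ^ 2) * h
  rw [← mul_eq_zero_iff_right (pow_ne_zero 4 (pow_ne_zero 2 (two_mul_ne_zero_of_Y_ne_negY hy))),
    key, mul_eq_zero_iff_left h3]

end CharFive

end WeierstrassCurve.Affine

open WeierstrassCurve.Affine WeierstrassCurve.Affine.Point

instance : E.IsShortNF := ⟨rfl, rfl, rfl⟩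

open Classical in
theorem six_torsion_not_two_torsion_iff (a b : K) (hab : b ^ 2 = a ^ 3 - 1)
    (h : E.Nonsingular a b) :
    (6 • WeierstrassCurve.Affine.Point.some _ _ h = 0 ∧
        2 • WeierstrassCurve.Affine.Point.some _ _ h ≠ 0) ↔
      (a ^ 25 = a ∧ b ^ 25 = b ∧ b ≠ 0) := by
  have h2 : (2 : K) ≠ 0 := by
    simpa using (CharP.cast_eq_zero_iff K 5 2).not.mpr (by norm_num)
  by_cases hb : b = 0
  · refine iff_of_false (fun h6 => h6.2 ((two_nsmul_some_eq_zero_iff h).mpr ?_))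
      (fun h' => h'.2.2 hb)
    simp [hb]
  have hy : b ≠ E.negY a b := by
    rwa [negY_of_isShortNF, ne_eq, eq_neg_iff_add_eq_zero, ← two_mul, mul_eq_zero,
      or_iff_right h2]
  have hb25 : b ^ 25 = b ↔ (a ^ 3 - 1) ^ 12 = 1 := by
    rw [← hab, ← pow_mul, pow_succ, mul_eq_right₀ hb]
  rw [show 6 = 3 * 2 from rfl, mul_nsmul', two_nsmul, add_self_of_Y_ne hy,
    three_nsmul_some_eq_zero_iff, eval_Ψ₃_addX_slope_self_eq_zero_iff rfl rfl h.1 hy,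
    ← pow_twentyFive_eq_self_and_cube_sub_one_pow_twelve_eq_one_iff, hb25]
  simp [hb, some_ne_zero]
end
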